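/- Let f : ℝⁿ × ℝˡ → ℝ ∪ {±∞} be lower semicontinuous, set ϑ(y) = inf_{x ∈ ℝⁿ} f(x, y), assume ϑ is finite at ȳ, let S(y) = argmin_x f(x, y), and let (v, μ) ∈ ℝˡ × ℝ. (i) If S is inner semicompact at ȳ (w.r.t. ℝˡ) in direction v, then y* ∈ ∂ϑ(ȳ; (v, μ)) implies (0, y*) ∈ ⋃_{x̄ ∈ S(ȳ)} [ (⋃_{h : μ ∈ Df(x̄, ȳ)(h, v)} ∂f((x̄, ȳ); (h, v, μ))) ∪ (⋃_{h ∈ 𝕊 : 0 ∈ Df(x̄, ȳ)(h, 0)} ∂f((x̄, ȳ); (h, 0, 0))) ]. (ii) If there exists x̄ ∈ S(ȳ) such that S is inner calm at (ȳ, x̄) (w.r.t. ℝˡ) in direction v, then y* ∈ ∂ϑ(ȳ; (v, μ)) implies (0, y*) ∈ ⋃_{h : μ ∈ Df(x̄, ȳ)(h, v)} ∂f((x̄, ȳ); (h, v, μ)). -/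

import Mathlib

open Filter Topology Set Pointwise

noncomputable section

namespace Paper

variable {E : Type*} [NormedAddCommGroup E] [InnerProductSpace ℝ E]
variable {F : Type*} [NormedAddCommGroup F] [InnerProductSpace ℝ F]

/-- The set `V_{ρ,δ}(u)`. -/
def dirNbhdBase (u : E) (ρ δ : ℝ) : Set E :=
  {z | ‖z‖ ≤ ρ ∧ ‖‖u‖ • z - ‖z‖ • u‖ ≤ δ * ‖z‖ * ‖u‖}

/-- `V` is a directional neighborhood of the direction `u`. -/
def IsDirNbhd (V : Set E) (u : E) : Prop :=
  ∃ ρ > (0:ℝ), ∃ δ > (0:ℝ), dirNbhdBase u ρ δ ⊆ V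

/-- Tangent (contingent/Bouligand) cone to `Ω` at `x`. -/
def tangentCone (Ω : Set E) (x : E) : Set E :=
  {u | ∃ (uk : ℕ → E) (tk : ℕ → ℝ), Tendsto uk atTop (𝓝 u) ∧ (∀ k, 0 < tk k) ∧
    Tendsto tk atTop (𝓝 0) ∧ ∀ k, x + tk k • uk k ∈ Ω}

/-- Fréchet (regular) normal cone to `Ω` at `x` (empty if `x ∉ Ω`). -/
def frechetNC (Ω : Set E) (x : E) : Set E :=
  {ξ | x ∈ Ω ∧ ∀ ε > (0:ℝ), ∀ᶠ y in 𝓝[Ω] x, (inner ℝ ξ (y - x) : ℝ) ≤ ε * ‖y - x‖}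

/-- Limiting (Mordukhovich) normal cone to `Ω` at `x`. -/
def limitingNC (Ω : Set E) (x : E) : Set E :=
  {ξ | ∃ (xk ξk : ℕ → E), (∀ k, xk k ∈ Ω) ∧ Tendsto xk atTop (𝓝 x) ∧
    Tendsto ξk atTop (𝓝 ξ) ∧ ∀ k, ξk k ∈ frechetNC Ω (xk k)}

/-- Directional limiting normal cone to `Ω` at `x` in direction `u`. -/
def dirNC (Ω : Set E) (x : E) (u : E) : Set E :=
  {ξ | ∃ (tk : ℕ → ℝ) (uk ξk : ℕ → E), (∀ k, 0 < tk k) ∧ Tendsto tk atTop (𝓝 0) ∧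
    Tendsto uk atTop (𝓝 u) ∧ Tendsto ξk atTop (𝓝 ξ) ∧
    ∀ k, ξk k ∈ frechetNC Ω (x + tk k • uk k)}

/-- The product `E × F` equipped with the (Euclidean) `ℓ²`-structure. -/
abbrev P2 (E F : Type*) := WithLp 2 (E × F)

/-- Pairing constructor for `P2`. -/
def mk2 {E F : Type*} (x : E) (y : F) : P2 E F := (WithLp.equiv 2 (E × F)).symm (x, y)

/-- Graph of a single-valued mapping. -/
def graphFun (φ : E → F) : Set (P2 E F) := {p | ∃ x, p = mk2 x (φ x)}

/-- Graph of a multifunction. -/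
def graphMulti (M : E → Set F) : Set (P2 E F) := {p | ∃ x y, p = mk2 x y ∧ y ∈ M x}

/-- Graphical derivative of a single-valued mapping. -/
def gderiv (φ : E → F) (x : E) (u : E) : Set F :=
  {v | mk2 u v ∈ tangentCone (graphFun φ) (mk2 x (φ x))}

/-- Graphical derivative of a multifunction at `(x, y)`. -/
def gderivM (M : E → Set F) (x : E) (y : F) (u : E) : Set F :=
  {v | mk2 u v ∈ tangentCone (graphMulti M) (mk2 x y)}

/-- Directional limiting coderivative of a single-valued mapping:
`D*φ(x;(u,v))(η)`. -/
def dirCoderiv (φ : E → F) (x : E) (u : E) (v : F) (η : F) : Set E :=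
  {ξ | mk2 ξ (-η) ∈ dirNC (graphFun φ) (mk2 x (φ x)) (mk2 u v)}

/-- Metric subregularity of the multifunction `M` at `(x, y) ∈ Gr M` in direction `u`. -/
def DirMetrSubreg (M : E → Set F) (x : E) (y : F) (u : E) : Prop :=
  ∃ κ > (0:ℝ), ∃ V : Set E, IsDirNbhd V u ∧
    ∀ x', x' - x ∈ V → Metric.infDist x' {z | y ∈ M z} ≤ κ * Metric.infDist y (M x')

/-- Calmness of a single-valued mapping at `x` in direction `u`. -/
def DirCalm (φ : E → F) (x : E) (u : E) : Prop :=
  ∃ κ > (0:ℝ), ∃ V : Set E, IsDirNbhd V u ∧ ∀ x', x' - x ∈ V → ‖φ x' - φ x‖ ≤ κ * ‖x' - x‖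

/-- Lipschitz continuity of a single-valued mapping near `x` in direction `u`. -/
def DirLipschitz (φ : E → F) (x : E) (u : E) : Prop :=
  ∃ κ > (0:ℝ), ∃ V : Set E, IsDirNbhd V u ∧
    ∀ x₁ x₂, x₁ - x ∈ V → x₂ - x ∈ V → ‖φ x₁ - φ x₂‖ ≤ κ * ‖x₁ - x₂‖

/-- Inner semicompactness of `S` at `y` w.r.t. `Ω` in direction `v`. -/
def DirInnerSemicompact (S : F → Set E) (y : F) (Ω : Set F) (v : F) : Prop :=
  ∀ (t : ℕ → ℝ) (vk : ℕ → F), (∀ k, 0 < t k) → Tendsto t atTop (𝓝 0) →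
    Tendsto vk atTop (𝓝 v) → (∀ k, y + t k • vk k ∈ Ω) →
    ∃ (K : ℕ → ℕ) (xk : ℕ → E) (x : E), StrictMono K ∧
      (∀ k, xk k ∈ S (y + t (K k) • vk (K k))) ∧ Tendsto xk atTop (𝓝 x)

/-- Inner calmness of `S` at `(y, x) ∈ Gr S` w.r.t. `Ω` in direction `v`. -/
def DirInnerCalm (S : F → Set E) (y : F) (x : E) (Ω : Set F) (v : F) : Prop :=
  ∃ κ > (0:ℝ), ∃ V : Set F, IsDirNbhd V v ∧
    ∀ y', y' - y ∈ V → y' ∈ Ω → ∃ x' ∈ S y', ‖x - x'‖ ≤ κ * ‖y' - y‖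

/-- Epigraph of an extended-real-valued function, as a subset of `E ×₂ ℝ`. -/
def epiE (f : E → EReal) : Set (P2 E ℝ) := {p | ∃ (x : E) (α : ℝ), p = mk2 x α ∧ f x ≤ (α : EReal)}

/-- Graph of an extended-real-valued function, as a subset of `E ×₂ ℝ`. -/
def graphE (f : E → EReal) : Set (P2 E ℝ) := {p | ∃ (x : E) (α : ℝ), p = mk2 x α ∧ f x = (α : EReal)}

/-- Graphical derivative `Df(x)(h)` of an extended-real-valued function. -/
def gderivE (f : E → EReal) (x : E) (h : E) : Set ℝ :=
  {ν | mk2 h ν ∈ tangentCone (graphE f) (mk2 x (f x).toReal)}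

/-- Directional limiting subdifferential `∂f(x;(h,ν))`. -/
def dirSubdiff (f : E → EReal) (x : E) (h : E) (ν : ℝ) : Set E :=
  {ξ | mk2 ξ (-1 : ℝ) ∈ dirNC (epiE f) (mk2 x (f x).toReal) (mk2 h ν)}

/-- Directional singular limiting subdifferential `∂^∞ f(x;(h,ν))`. -/
def dirSingSubdiff (f : E → EReal) (x : E) (h : E) (ν : ℝ) : Set E :=
  {ξ | mk2 ξ (0 : ℝ) ∈ dirNC (epiE f) (mk2 x (f x).toReal) (mk2 h ν)}

/-- Fréchet (regular) subdifferential `∂̂f(x)`. -/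
def regSubdiff (f : E → EReal) (x : E) : Set E :=
  {ξ | ∀ ε > (0:ℝ), ∀ᶠ y in 𝓝 x,
    f x + ((((inner ℝ ξ (y - x) : ℝ)) - ε * ‖y - x‖ : ℝ) : EReal) ≤ f y}

/-- Analytic directional limiting subdifferential `∂ₐf(x;h)`. -/
def aDirSubdiff (f : E → EReal) (x : E) (h : E) : Set E :=
  {ξ | ∃ (t : ℕ → ℝ) (hk ξk : ℕ → E), (∀ k, 0 < t k) ∧ Tendsto t atTop (𝓝 0) ∧
    Tendsto hk atTop (𝓝 h) ∧ Tendsto ξk atTop (𝓝 ξ) ∧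
    Tendsto (fun k => f (x + t k • hk k)) atTop (𝓝 (f x)) ∧
    ∀ k, ξk k ∈ regSubdiff f (x + t k • hk k)}

/-- Domain of an extended-real-valued function. -/
def domE (f : E → EReal) : Set E := {x | f x ≠ ⊤ ∧ f x ≠ ⊥}

/-- Calmness of an extended-real-valued function at `x` in direction `h`
(understood w.r.t. its domain). -/
def DirCalmE (f : E → EReal) (x : E) (h : E) : Prop :=
  ∃ κ > (0:ℝ), ∃ V : Set E, IsDirNbhd V h ∧
    ∀ x', x' - x ∈ V → x' ∈ domE f → |(f x').toReal - (f x).toReal| ≤ κ * ‖x' - x‖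

/-- The set `N_{epi f}((x, f(x)); (h, ±∞))`; use `L = atTop` for `+∞` and `L = atBot` for `-∞`. -/
def NepiInfty (f : E → EReal) (x : E) (h : E) (L : Filter ℝ) : Set (P2 E ℝ) :=
  {q | ∃ (t νs : ℕ → ℝ) (hk : ℕ → E) (qk : ℕ → P2 E ℝ),
    (∀ k, 0 < t k) ∧ Tendsto t atTop (𝓝 0) ∧ Tendsto hk atTop (𝓝 h) ∧
    Tendsto νs atTop L ∧ Tendsto (fun k => t k * νs k) atTop (𝓝 0) ∧
    Tendsto qk atTop (𝓝 q) ∧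
    ∀ k, qk k ∈ frechetNC (epiE f) (mk2 x (f x).toReal + t k • mk2 (hk k) (νs k))}

/-- Directional differentiability: `f′(x;h) = d` as a limit over `t ↓ 0`, `h′ → h`. -/
def HasDirDeriv (f : E → EReal) (x : E) (h : E) (d : ℝ) : Prop :=
  Tendsto (fun p : ℝ × E => ((p.1⁻¹ : ℝ) : EReal) * (f (x + p.1 • p.2) - f x))
    ((𝓝[>] (0:ℝ)) ×ˢ 𝓝 h) (𝓝 (d : EReal))

abbrev Euc (n : ℕ) := EuclideanSpace ℝ (Fin n)

/-!
Write `ϑ = optimalValue f` and `S = argminMap f`. A Fréchet normal `(η, c)` to `epi ϑ` at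
`(y, α)` with `c < 0` forces `ϑ(y) = α`, and then `((0, η), c)` is a Fréchet normal to `epi f`
at `(x, y, α)` for every minimizer `x` of `f(·, y)`: the projection `(x, y, α) ↦ (y, α)` maps
`epi f` into `epi ϑ` and does not increase distances. So a sequence of normals realising
`y* ∈ ∂ϑ(ȳ; (v, μ))` at the points `(ȳ + t_k v_k, ϑ(ȳ) + t_k μ_k)` lifts to `epi f` as soon as
minimizers `x_k` approach some `x̄ ∈ S(ȳ)` in a direction `h` at the rate `t_k`.
Inner calmness provides such minimizers directly. Under inner semicompactness, minimizers
converge along a subsequence to some `x̄`, which lies in `S(ȳ)` by lower semicontinuity; if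
`(x_k - x̄) / t_k` is unbounded, measuring time by `‖x_k - x̄‖` instead sends `(v, μ)` to
`(0, 0)` and produces a unit direction `h`.
-/

set_option linter.unusedSectionVars false

section Product

variable {ι : Type*} {l : Filter ι}

@[simp] lemma mk2_fst (x : E) (y : F) : (mk2 x y).fst = x := rfl

@[simp] lemma mk2_snd (x : E) (y : F) : (mk2 x y).snd = y := rfl

lemma mk2_zero : mk2 (0 : E) (0 : F) = 0 := rfl

lemma tendsto_mk2 {a : ι → E} {b : ι → F} {x : E} {y : F} (ha : Tendsto a l (𝓝 x))
    (hb : Tendsto b l (𝓝 y)) : Tendsto (fun i => mk2 (a i) (b i)) l (𝓝 (mk2 x y)) :=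
  ((WithLp.prod_continuous_toLp 2 E F).tendsto _).comp (ha.prodMk_nhds hb)

lemma tendsto_fst {q : ι → P2 E F} {q₀ : P2 E F} (h : Tendsto q l (𝓝 q₀)) :
    Tendsto (fun i => (q i).fst) l (𝓝 q₀.fst) :=
  ((WithLp.continuous_fst 2 E F).tendsto _).comp h

lemma tendsto_snd {q : ι → P2 E F} {q₀ : P2 E F} (h : Tendsto q l (𝓝 q₀)) :
    Tendsto (fun i => (q i).snd) l (𝓝 q₀.snd) :=
  ((WithLp.continuous_snd 2 E F).tendsto _).comp h

end Product

section Cones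

variable {ι : Type*} {l : Filter ι} [l.NeBot] [l.IsCountablyGenerated] {Ω : Set E} {z₀ u : E}
  {τ : ι → ℝ} {z : ι → E}

theorem mem_tangentCone_of_tendsto (hτ : ∀ᶠ i in l, 0 < τ i) (hτ0 : Tendsto τ l (𝓝 0))
    (hz : ∀ᶠ i in l, z i ∈ Ω) (hu : Tendsto (fun i => (τ i)⁻¹ • (z i - z₀)) l (𝓝 u)) :
    u ∈ tangentCone Ω z₀ := by
  obtain ⟨s, hs, hsz⟩ := exists_seq_forall_of_frequently (hτ.and hz).frequently
  refine ⟨_, _, hu.comp hs, fun k => (hsz k).1, hτ0.comp hs, fun k => ?_⟩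
  simpa [smul_inv_smul₀ (hsz k).1.ne'] using (hsz k).2

theorem mem_dirNC_of_tendsto {ξ : ι → E} {ξ₀ : E} (hτ : ∀ᶠ i in l, 0 < τ i)
    (hτ0 : Tendsto τ l (𝓝 0)) (hξ : ∀ᶠ i in l, ξ i ∈ frechetNC Ω (z i))
    (hξ₀ : Tendsto ξ l (𝓝 ξ₀)) (hu : Tendsto (fun i => (τ i)⁻¹ • (z i - z₀)) l (𝓝 u)) :
    ξ₀ ∈ dirNC Ω z₀ u := by
  obtain ⟨s, hs, hsz⟩ := exists_seq_forall_of_frequently (hτ.and hξ).frequently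
  refine ⟨_, _, _, fun k => (hsz k).1, hτ0.comp hs, hu.comp hs, hξ₀.comp hs, fun k => ?_⟩
  simpa [smul_inv_smul₀ (hsz k).1.ne'] using (hsz k).2

end Cones

section FrechetNormals

lemma mk2_mem_epiE {g : E → EReal} {x : E} {α : ℝ} (h : g x ≤ α) : mk2 x α ∈ epiE g :=
  ⟨x, α, rfl, h⟩

theorem mem_frechetNC_of_mapsTo {Ω₁ : Set E} {Ω₂ : Set F} (L : E →L[ℝ] F) (hL : MapsTo L Ω₁ Ω₂)
    {x : E} (hx : x ∈ Ω₁) {ξ : F} (hξ : ξ ∈ frechetNC Ω₂ (L x)) {ξ' : E}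
    (hξ' : ∀ w, inner ℝ ξ' w = inner ℝ ξ (L w)) : ξ' ∈ frechetNC Ω₁ x := by
  refine ⟨hx, fun ε hε => ?_⟩
  have hLx : Tendsto L (𝓝[Ω₁] x) (𝓝[Ω₂] (L x)) :=
    L.continuous.continuousWithinAt.tendsto_nhdsWithin hL
  filter_upwards [hLx.eventually (hξ.2 (ε / (‖L‖ + 1)) (by positivity))] with y hy
  calc inner ℝ ξ' (y - x) = inner ℝ ξ (L y - L x) := by rw [hξ', map_sub]
    _ ≤ ε / (‖L‖ + 1) * ‖L (y - x)‖ := by rwa [map_sub]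
    _ ≤ ε / (‖L‖ + 1) * ((‖L‖ + 1) * ‖y - x‖) := by
        gcongr
        exact (L.le_opNorm _).trans (by gcongr; linarith)
    _ = ε * ‖y - x‖ := by field_simp

theorem apply_eq_of_mem_frechetNC_epiE {g : E → EReal} {p ξ : P2 E ℝ}
    (hξ : ξ ∈ frechetNC (epiE g) p) (hc : ξ.snd < 0) : g p.fst = p.snd := by
  obtain ⟨⟨y, α, rfl, hle⟩, hnormal⟩ := hξ
  refine le_antisymm hle (not_lt.1 fun hlt => ?_)
  obtain ⟨r, hr, hrα⟩ := EReal.exists_between_coe_real hlt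
  have hrα : r < α := by exact_mod_cast hrα
  -- `(y, α - s) ∈ epi g` for small `s > 0`, and `⟪ξ, (0, -s)⟫ = -ξ.snd * s` beats `ε = -ξ.snd / 2`
  have hdown : Tendsto (fun s : ℝ => mk2 y (α - s)) (𝓝[>] 0) (𝓝[epiE g] (mk2 y α)) := by
    refine tendsto_nhdsWithin_of_tendsto_nhds_of_eventually_within _ ?_ ?_
    · have hα : Tendsto (fun s : ℝ => α - s) (𝓝[>] 0) (𝓝 α) := by
        simpa using (tendsto_const_nhds.sub tendsto_id).mono_left
          (nhdsWithin_le_nhds (a := (0 : ℝ)))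
      exact tendsto_mk2 tendsto_const_nhds hα
    · filter_upwards [Ioo_mem_nhdsGT (sub_pos.2 hrα)] with s hs
      exact mk2_mem_epiE (hr.le.trans (by exact_mod_cast (by linarith [hs.2] : r ≤ α - s)))
  obtain ⟨s, hs, hspos⟩ :=
    ((hdown.eventually (hnormal (-ξ.snd / 2) (by linarith))).and self_mem_nhdsWithin).exists
  have hspos : (0 : ℝ) < s := hspos
  have hdiff : mk2 y (α - s) - mk2 y α = mk2 (0 : E) (-s) := by
    change mk2 (y - y) (α - s - α) = _
    rw [sub_self, sub_sub_cancel_left]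
  rw [hdiff] at hs
  simp [mk2, WithLp.prod_inner_apply, abs_of_pos hspos] at hs
  nlinarith

end FrechetNormals

theorem IsDirNbhd.eventually_smul_mem {ι : Type*} {l : Filter ι} {V : Set E} {u : E}
    (hV : IsDirNbhd V u) {t : ι → ℝ} {w : ι → E} (ht : ∀ᶠ i in l, 0 < t i)
    (ht0 : Tendsto t l (𝓝 0)) (hw : Tendsto w l (𝓝 u)) : ∀ᶠ i in l, t i • w i ∈ V := by
  obtain ⟨ρ, hρ, δ, hδ, hsub⟩ := hV
  have hsmall : ∀ᶠ i in l, ‖t i • w i‖ < ρ := by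
    have h0 : Tendsto (fun i => ‖t i • w i‖) l (𝓝 0) := by simpa using (ht0.smul hw).norm
    exact h0.eventually_lt_const hρ
  have hangle : ∀ᶠ i in l, ‖‖u‖ • w i - ‖w i‖ • u‖ ≤ δ * ‖w i‖ * ‖u‖ := by
    rcases eq_or_ne u 0 with rfl | hu
    · simp
    have hL : Tendsto (fun i => ‖‖u‖ • w i - ‖w i‖ • u‖) l (𝓝 0) := by
      simpa using (((tendsto_const_nhds (x := ‖u‖)).smul hw).sub
        (hw.norm.smul (tendsto_const_nhds (x := u)))).norm
    have hR : Tendsto (fun i => δ * ‖w i‖ * ‖u‖) l (𝓝 (δ * ‖u‖ * ‖u‖)) :=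
      (tendsto_const_nhds.mul hw.norm).mul tendsto_const_nhds
    exact (hL.eventually_lt hR (by positivity)).mono fun i h => h.le
  filter_upwards [ht, hsmall, hangle] with i hti hi hi'
  refine hsub ⟨hi.le, ?_⟩
  have hscale : ‖u‖ • (t i • w i) - ‖t i • w i‖ • u = t i • (‖u‖ • w i - ‖w i‖ • u) := by
    rw [norm_smul, Real.norm_of_nonneg hti.le, smul_sub, smul_comm, mul_smul]
  rw [hscale, norm_smul, norm_smul, Real.norm_of_nonneg hti.le]
  calc t i * ‖‖u‖ • w i - ‖w i‖ • u‖ ≤ t i * (δ * ‖w i‖ * ‖u‖) := by gcongr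
    _ = δ * (t i * ‖w i‖) * ‖u‖ := by ring

section ValueFunction

def optimalValue (f : P2 E F → EReal) (y : F) : EReal := ⨅ x, f (mk2 x y)

def argminMap (f : P2 E F → EReal) (y : F) : Set E := {x | ∀ x', f (mk2 x y) ≤ f (mk2 x' y)}

/-- The projection `(x, y, α) ↦ (y, α)`. -/
def forgetFstL : P2 (P2 E F) ℝ →L[ℝ] P2 F ℝ :=
  (WithLp.prodContinuousLinearEquiv 2 ℝ F ℝ).symm.toContinuousLinearMap ∘L
    ((WithLp.sndL 2 ℝ E F ∘L WithLp.fstL 2 ℝ (P2 E F) ℝ).prod (WithLp.sndL 2 ℝ (P2 E F) ℝ))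

variable {ι : Type*} {f : P2 E F → EReal}

theorem optimalValue_le (x : E) (y : F) : optimalValue f y ≤ f (mk2 x y) := iInf_le _ x

theorem mem_argminMap_iff {x : E} {y : F} : x ∈ argminMap f y ↔ f (mk2 x y) = optimalValue f y :=
  ⟨fun h => le_antisymm (le_iInf h) (optimalValue_le x y), fun h x' => h ▸ optimalValue_le x' y⟩

theorem mapsTo_forgetFstL_epiE :
    MapsTo (forgetFstL (E := E) (F := F)) (epiE f) (epiE (optimalValue f)) := by
  rintro _ ⟨q, α, rfl, hq⟩
  exact mk2_mem_epiE ((optimalValue_le q.fst q.snd).trans hq)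

theorem lift_mem_frechetNC_epiE {x : E} {p ξ : P2 F ℝ} (hx : f (mk2 x p.fst) ≤ p.snd)
    (hξ : ξ ∈ frechetNC (epiE (optimalValue f)) p) :
    mk2 (mk2 0 ξ.fst) ξ.snd ∈ frechetNC (epiE f) (mk2 (mk2 x p.fst) p.snd) :=
  mem_frechetNC_of_mapsTo forgetFstL mapsTo_forgetFstL_epiE (mk2_mem_epiE hx) hξ
    fun w => by simp [WithLp.prod_inner_apply, forgetFstL, mk2]

theorem eventually_apply_eq_of_frechetNC {l : Filter ι} {x : ι → E} {p ξ : ι → P2 F ℝ} {ystar : F}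
    (hx : ∀ᶠ i in l, x i ∈ argminMap f (p i).fst)
    (hξ : ∀ᶠ i in l, ξ i ∈ frechetNC (epiE (optimalValue f)) (p i))
    (hξy : Tendsto ξ l (𝓝 (mk2 ystar (-1)))) :
    ∀ᶠ i in l, f (mk2 (x i) (p i).fst) = (p i).snd := by
  have hneg : ∀ᶠ i in l, (ξ i).snd < 0 := (tendsto_snd hξy).eventually_lt_const (by norm_num)
  filter_upwards [hx, hξ, hneg] with i hxi hξi hci
  rw [mem_argminMap_iff.1 hxi]
  exact apply_eq_of_mem_frechetNC_epiE hξi hci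

theorem mem_argminMap_of_tendsto (hf : LowerSemicontinuous f) {yb : F}
    (hfin : optimalValue f yb ≠ ⊤ ∧ optimalValue f yb ≠ ⊥) {l : Filter ι} [l.NeBot]
    {x : ι → E} {p : ι → P2 F ℝ} {xb : E} (hx : Tendsto x l (𝓝 xb))
    (hp : Tendsto p l (𝓝 (mk2 yb (optimalValue f yb).toReal)))
    (hgraph : ∀ᶠ i in l, f (mk2 (x i) (p i).fst) ≤ (p i).snd) : xb ∈ argminMap f yb := by
  have hle : f (mk2 xb yb) ≤ ((optimalValue f yb).toReal : EReal) :=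
    hf.isClosed_epigraph.mem_of_tendsto ((tendsto_mk2 hx (tendsto_fst hp)).prodMk_nhds
      ((continuous_coe_real_ereal.tendsto _).comp (tendsto_snd hp))) hgraph
  rw [EReal.coe_toReal hfin.1 hfin.2] at hle
  exact mem_argminMap_iff.2 (le_antisymm hle (optimalValue_le _ _))

theorem gderivE_dirSubdiff_of_minimizers {l : Filter ι} [l.NeBot] [l.IsCountablyGenerated]
    {xb : E} {yb : F} (hxb : xb ∈ argminMap f yb) {τ : ι → ℝ} {x : ι → E} {p ξ : ι → P2 F ℝ}
    {h : E} {v : F} {μ : ℝ} {ystar : F} (hτ : ∀ᶠ i in l, 0 < τ i) (hτ0 : Tendsto τ l (𝓝 0))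
    (hx : ∀ᶠ i in l, x i ∈ argminMap f (p i).fst)
    (hξ : ∀ᶠ i in l, ξ i ∈ frechetNC (epiE (optimalValue f)) (p i))
    (hξy : Tendsto ξ l (𝓝 (mk2 ystar (-1))))
    (hdx : Tendsto (fun i => (τ i)⁻¹ • (x i - xb)) l (𝓝 h))
    (hdp : Tendsto (fun i => (τ i)⁻¹ • (p i - mk2 yb (optimalValue f yb).toReal)) l
      (𝓝 (mk2 v μ))) :
    μ ∈ gderivE f (mk2 xb yb) (mk2 h v) ∧ mk2 0 ystar ∈ dirSubdiff f (mk2 xb yb) (mk2 h v) μ := by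
  have hgraph := eventually_apply_eq_of_frechetNC hx hξ hξy
  have hdz : Tendsto (fun i => (τ i)⁻¹ • (mk2 (mk2 (x i) (p i).fst) (p i).snd -
      mk2 (mk2 xb yb) (f (mk2 xb yb)).toReal)) l (𝓝 (mk2 (mk2 h v) μ)) := by
    rw [mem_argminMap_iff.1 hxb]
    exact tendsto_mk2 (tendsto_mk2 hdx (tendsto_fst hdp)) (tendsto_snd hdp)
  refine ⟨mem_tangentCone_of_tendsto hτ hτ0 (hgraph.mono fun i hi => ⟨_, _, rfl, hi⟩) hdz, ?_⟩
  refine mem_dirNC_of_tendsto hτ hτ0 ?_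
    (tendsto_mk2 (tendsto_mk2 tendsto_const_nhds (tendsto_fst hξy)) (tendsto_snd hξy)) hdz
  filter_upwards [hgraph, hξ] with i hi hξi
  exact lift_mem_frechetNC_epiE hi.le hξi

theorem exists_gderivE_dirSubdiff_of_frequently_mem [ProperSpace E] {B : Set E}
    (hB : Bornology.IsBounded B) {xb : E} {yb : F} (hxb : xb ∈ argminMap f yb) {τ : ℕ → ℝ}
    {x : ℕ → E} {p ξ : ℕ → P2 F ℝ} {v : F} {μ : ℝ} {ystar : F} (hτ : ∀ᶠ k in atTop, 0 < τ k)
    (hτ0 : Tendsto τ atTop (𝓝 0)) (hx : ∀ᶠ k in atTop, x k ∈ argminMap f (p k).fst)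
    (hξ : ∀ᶠ k in atTop, ξ k ∈ frechetNC (epiE (optimalValue f)) (p k))
    (hξy : Tendsto ξ atTop (𝓝 (mk2 ystar (-1))))
    (hdp : Tendsto (fun k => (τ k)⁻¹ • (p k - mk2 yb (optimalValue f yb).toReal)) atTop
      (𝓝 (mk2 v μ)))
    (hdxB : ∃ᶠ k in atTop, (τ k)⁻¹ • (x k - xb) ∈ B) :
    ∃ h ∈ closure B,
      μ ∈ gderivE f (mk2 xb yb) (mk2 h v) ∧ mk2 0 ystar ∈ dirSubdiff f (mk2 xb yb) (mk2 h v) μ := by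
  obtain ⟨h, hhB, φ, hφ, hdx⟩ := tendsto_subseq_of_frequently_bounded hB hdxB
  have hφ' := hφ.tendsto_atTop
  exact ⟨h, hhB, gderivE_dirSubdiff_of_minimizers (l := map φ atTop) hxb (hφ' hτ)
    (hτ0.mono_left hφ') (hφ' hx) (hφ' hξ) (hξy.mono_left hφ') hdx (hdp.mono_left hφ')⟩

theorem exists_unit_gderivE_dirSubdiff_of_tendsto_atTop [ProperSpace E] {xb : E} {yb : F}
    (hxb : xb ∈ argminMap f yb) {τ : ℕ → ℝ} {x : ℕ → E} {p ξ : ℕ → P2 F ℝ} {v : F} {μ : ℝ}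
    {ystar : F} (hτ : ∀ᶠ k in atTop, 0 < τ k) (hx : ∀ᶠ k in atTop, x k ∈ argminMap f (p k).fst)
    (hξ : ∀ᶠ k in atTop, ξ k ∈ frechetNC (epiE (optimalValue f)) (p k))
    (hξy : Tendsto ξ atTop (𝓝 (mk2 ystar (-1))))
    (hdp : Tendsto (fun k => (τ k)⁻¹ • (p k - mk2 yb (optimalValue f yb).toReal)) atTop
      (𝓝 (mk2 v μ)))
    (hxlim : Tendsto x atTop (𝓝 xb))
    (hunb : Tendsto (fun k => ‖(τ k)⁻¹ • (x k - xb)‖) atTop atTop) :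
    ∃ h, ‖h‖ = 1 ∧ (0 : ℝ) ∈ gderivE f (mk2 xb yb) (mk2 h 0) ∧
      mk2 0 ystar ∈ dirSubdiff f (mk2 xb yb) (mk2 h 0) 0 := by
  set s := fun k => ‖(τ k)⁻¹ • (x k - xb)‖
  -- measure time by `τ k * s k = ‖x k - xb‖` instead of `τ k`
  have hs : ∀ᶠ k in atTop, 0 < s k := hunb.eventually_gt_atTop 0
  have hσ : ∀ᶠ k in atTop, 0 < τ k * s k := (hτ.and hs).mono fun k hk => mul_pos hk.1 hk.2
  have hσ0 : Tendsto (fun k => τ k * s k) atTop (𝓝 0) := by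
    refine (tendsto_iff_norm_sub_tendsto_zero.1 hxlim).congr' (hτ.mono fun k hk => ?_)
    simp only [s, norm_smul, norm_inv, Real.norm_of_nonneg hk.le, mul_inv_cancel_left₀ hk.ne']
  have hdp' : Tendsto (fun k => (τ k * s k)⁻¹ • (p k - mk2 yb (optimalValue f yb).toReal))
      atTop (𝓝 (mk2 0 0)) := by
    simp_rw [mul_inv_rev, mul_smul]
    simpa [mk2_zero] using (tendsto_inv_atTop_zero.comp hunb).smul hdp
  have hunit : ∀ᶠ k in atTop, (τ k * s k)⁻¹ • (x k - xb) ∈ Metric.sphere (0 : E) 1 :=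
    hs.mono fun k hk => by
      rw [mem_sphere_zero_iff_norm, mul_inv_rev, mul_smul, norm_smul, norm_inv, norm_norm]
      exact inv_mul_cancel₀ hk.ne'
  obtain ⟨h, hh, hmem⟩ := exists_gderivE_dirSubdiff_of_frequently_mem Metric.isBounded_sphere
    hxb hσ hσ0 hx hξ hξy hdp' hunit.frequently
  rw [Metric.isClosed_sphere.closure_eq, mem_sphere_zero_iff_norm] at hh
  exact ⟨h, hh, hmem⟩

theorem dirSubdiff_optimalValue_of_innerSemicompact [ProperSpace E] (hf : LowerSemicontinuous f)
    {yb : F} (hfin : optimalValue f yb ≠ ⊤ ∧ optimalValue f yb ≠ ⊥) {v : F} {μ : ℝ}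
    (hisc : DirInnerSemicompact (argminMap f) yb univ v) {ystar : F}
    (hy : ystar ∈ dirSubdiff (optimalValue f) yb v μ) :
    ∃ xb ∈ argminMap f yb,
      (∃ h, μ ∈ gderivE f (mk2 xb yb) (mk2 h v) ∧
        mk2 0 ystar ∈ dirSubdiff f (mk2 xb yb) (mk2 h v) μ) ∨
      (∃ h, ‖h‖ = 1 ∧ (0 : ℝ) ∈ gderivE f (mk2 xb yb) (mk2 h 0) ∧
        mk2 0 ystar ∈ dirSubdiff f (mk2 xb yb) (mk2 h 0) 0) := by
  obtain ⟨t, u, ξ, ht, ht0, hu, hξy, hξ⟩ := hy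
  obtain ⟨K, x, xb, hK, hx, hxlim⟩ :=
    hisc t (fun k => (u k).fst) ht ht0 (tendsto_fst hu) fun _ => mem_univ _
  set p₀ := mk2 yb (optimalValue f yb).toReal
  have hK' := hK.tendsto_atTop
  have hτ : ∀ᶠ k in atTop, 0 < t (K k) := .of_forall fun k => ht _
  have hx' : ∀ᶠ k in atTop, x k ∈ argminMap f (p₀ + t (K k) • u (K k)).fst := .of_forall hx
  have hξ' : ∀ᶠ k in atTop, ξ (K k) ∈ frechetNC (epiE (optimalValue f)) (p₀ + t (K k) • u (K k)) :=
    .of_forall fun k => hξ (K k)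
  have hdp : Tendsto (fun k => (t (K k))⁻¹ • (p₀ + t (K k) • u (K k) - p₀)) atTop
      (𝓝 (mk2 v μ)) :=
    (hu.comp hK').congr fun k => by simp [inv_smul_smul₀ (ht (K k)).ne']
  have hp : Tendsto (fun k => p₀ + t (K k) • u (K k)) atTop (𝓝 p₀) := by
    simpa using tendsto_const_nhds.add ((ht0.comp hK').smul (hu.comp hK'))
  have hxb : xb ∈ argminMap f yb := mem_argminMap_of_tendsto hf hfin hxlim hp
    ((eventually_apply_eq_of_frechetNC hx' hξ' (hξy.comp hK')).mono fun k hk => hk.le)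
  refine ⟨xb, hxb, ?_⟩
  by_cases hbdd : ∃ C, ∃ᶠ k in atTop, ‖(t (K k))⁻¹ • (x k - xb)‖ ≤ C
  · obtain ⟨C, hC⟩ := hbdd
    obtain ⟨h, -, hh⟩ := exists_gderivE_dirSubdiff_of_frequently_mem
      (Metric.isBounded_closedBall (x := 0) (r := C)) hxb hτ (ht0.comp hK') hx' hξ'
      (hξy.comp hK') hdp (by simpa only [mem_closedBall_zero_iff] using hC)
    exact Or.inl ⟨h, hh⟩
  · push Not at hbdd
    exact Or.inr (exists_unit_gderivE_dirSubdiff_of_tendsto_atTop hxb hτ hx' hξ' (hξy.comp hK')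
      hdp hxlim (tendsto_atTop.2 fun C => (hbdd C).mono fun k => le_of_lt))

theorem dirSubdiff_optimalValue_of_innerCalm [ProperSpace E] {xb : E} {yb : F}
    (hxb : xb ∈ argminMap f yb) {v : F} {μ : ℝ} (hic : DirInnerCalm (argminMap f) yb xb univ v)
    {ystar : F} (hy : ystar ∈ dirSubdiff (optimalValue f) yb v μ) :
    ∃ h, μ ∈ gderivE f (mk2 xb yb) (mk2 h v) ∧
      mk2 0 ystar ∈ dirSubdiff f (mk2 xb yb) (mk2 h v) μ := by
  obtain ⟨t, u, ξ, ht, ht0, hu, hξy, hξ⟩ := hy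
  obtain ⟨κ, hκ, V, hV, hcalm⟩ := hic
  set p₀ := mk2 yb (optimalValue f yb).toReal
  have hsel : ∀ k, ∃ x', t k • (u k).fst ∈ V →
      x' ∈ argminMap f (p₀ + t k • u k).fst ∧ ‖xb - x'‖ ≤ κ * ‖t k • (u k).fst‖ := by
    intro k
    by_cases hk : t k • (u k).fst ∈ V
    · obtain ⟨x', hx', hle⟩ := hcalm (yb + t k • (u k).fst) (by simpa using hk) (mem_univ _)
      exact ⟨x', fun _ => ⟨hx', by simpa using hle⟩⟩
    · exact ⟨xb, fun h => absurd h hk⟩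
  choose x hx using hsel
  have hV' : ∀ᶠ k in atTop, t k • (u k).fst ∈ V :=
    hV.eventually_smul_mem (.of_forall ht) ht0 (tendsto_fst hu)
  have hnorm : ∀ᶠ k in atTop, ‖(u k).fst‖ < ‖v‖ + 1 :=
    (tendsto_fst hu).norm.eventually_lt_const (lt_add_one _)
  have hB : ∀ᶠ k in atTop, (t k)⁻¹ • (x k - xb) ∈ Metric.closedBall (0 : E) (κ * (‖v‖ + 1)) := by
    filter_upwards [hV', hnorm] with k hk hk'
    rw [mem_closedBall_zero_iff, norm_smul, norm_inv, Real.norm_of_nonneg (ht k).le, norm_sub_rev,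
      inv_mul_le_iff₀ (ht k)]
    calc ‖xb - x k‖ ≤ κ * ‖t k • (u k).fst‖ := (hx k hk).2
      _ = t k * (κ * ‖(u k).fst‖) := by rw [norm_smul, Real.norm_of_nonneg (ht k).le]; ring
      _ ≤ t k * (κ * (‖v‖ + 1)) := by gcongr; exact (ht k).le
  have hdp : Tendsto (fun k => (t k)⁻¹ • (p₀ + t k • u k - p₀)) atTop (𝓝 (mk2 v μ)) :=
    hu.congr fun k => by simp [inv_smul_smul₀ (ht k).ne']
  obtain ⟨h, -, hh⟩ := exists_gderivE_dirSubdiff_of_frequently_mem Metric.isBounded_closedBall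
    hxb (.of_forall ht) ht0 (hV'.mono fun k hk => (hx k hk).1) (.of_forall hξ) hξy hdp
    hB.frequently
  exact ⟨h, hh⟩

end ValueFunction

/-- **Theorem 4.2 (directional subdifferentials of the value function).** -/
theorem dirSubdiff_value_function {n l : ℕ} (f : P2 (Euc n) (Euc l) → EReal)
    (hlsc : LowerSemicontinuous f) (θ : Euc l → EReal)
    (hθ : θ = fun y => ⨅ x : Euc n, f (mk2 x y)) (yb : Euc l)
    (hfin : θ yb ≠ ⊤ ∧ θ yb ≠ ⊥) (S : Euc l → Set (Euc n))
    (hS : S = fun y => {x : Euc n | ∀ x' : Euc n, f (mk2 x y) ≤ f (mk2 x' y)})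
    (v : Euc l) (μ : ℝ) :
    (DirInnerSemicompact S yb univ v →
      ∀ ystar ∈ dirSubdiff θ yb v μ,
        mk2 (0 : Euc n) ystar ∈ ⋃ xb ∈ S yb,
          ((⋃ h ∈ {h : Euc n | μ ∈ gderivE f (mk2 xb yb) (mk2 h v)},
              dirSubdiff f (mk2 xb yb) (mk2 h v) μ) ∪
           (⋃ h ∈ {h : Euc n | ‖h‖ = 1 ∧ (0:ℝ) ∈ gderivE f (mk2 xb yb) (mk2 h (0 : Euc l))},
              dirSubdiff f (mk2 xb yb) (mk2 h (0 : Euc l)) 0))) ∧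
    (∀ xb ∈ S yb, DirInnerCalm S yb xb univ v →
      ∀ ystar ∈ dirSubdiff θ yb v μ,
        mk2 (0 : Euc n) ystar ∈
          ⋃ h ∈ {h : Euc n | μ ∈ gderivE f (mk2 xb yb) (mk2 h v)},
            dirSubdiff f (mk2 xb yb) (mk2 h v) μ) := by
  subst hθ hS
  refine ⟨fun hisc ystar hy => ?_, fun xb hxb hic ystar hy => ?_⟩
  · obtain ⟨xb, hxb, hcases⟩ := dirSubdiff_optimalValue_of_innerSemicompact hlsc hfin hisc hy
    refine mem_iUnion₂.2 ⟨xb, hxb, ?_⟩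
    rcases hcases with ⟨h, hμ, hmem⟩ | ⟨h, hh, h0, hmem⟩
    · exact Or.inl (mem_iUnion₂.2 ⟨h, hμ, hmem⟩)
    · exact Or.inr (mem_iUnion₂.2 ⟨h, ⟨hh, h0⟩, hmem⟩)
  · obtain ⟨h, hμ, hmem⟩ := dirSubdiff_optimalValue_of_innerCalm hxb hic hy
    exact mem_iUnion₂.2 ⟨h, hμ, hmem⟩

end Paper
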